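/- The bilinear form φ satisfies the twisted 2-cocycle condition: for all finitely supported functions u, v, w : ℤ → ℝ, φ(B(v,w), Γu) + φ(B(w,u), Γv) + φ(B(u,v), Γw) = 0. (Together with antisymmetry, this is the assertion of Theorem 3.1 that φ is a cocycle on the q-deformed Witt algebra.) -/

import Mathlib

/-- The q-integer `[m] = (q^m - q^(-m))/(q - q⁻¹)`, for real `q`. -/
noncomputable def qInt (q : ℝ) (m : ℤ) : ℝ := (q ^ m - q ^ (-m)) / (q - q⁻¹)

/-- `⟨m⟩ = q^m + q^(-m)`, for real `q`. -/
noncomputable def qBra (q : ℝ) (m : ℤ) : ℝ := q ^ m + q ^ (-m)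

/-- `γ_m = [m+1][m][m−1]/([2][3]⟨m⟩)`. -/
noncomputable def qGamma (q : ℝ) (m : ℤ) : ℝ :=
  qInt q (m + 1) * qInt q m * qInt q (m - 1) / (qInt q 2 * qInt q 3 * qBra q m)

/-- The bracket on coefficient sequences:
`B(v,w)(s) = Σ_{n+m+1=s} [n−m]·v(n+1)·w(m+1)`.  (With `i = n+1`, `j = m+1`, the
basis term `z^{i}∂_q` bracketed with `z^{j}∂_q` contributes
`[i−j]·v(i)·w(j)` at position `s = i+j−1`.) -/
noncomputable def B (q : ℝ) (v w : ℤ →₀ ℝ) : ℤ →₀ ℝ :=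
  v.sum fun i a => w.sum fun j b => Finsupp.single (i + j - 1) (qInt q (i - j) * a * b)

/-- The twist `Γ(u)(k) = ⟨k−1⟩·u(k)` (so that `Γ(d_p) = ⟨p⟩·d_p` on basis fields). -/
noncomputable def Gam (q : ℝ) (u : ℤ →₀ ℝ) : ℤ →₀ ℝ :=
  u.sum fun k a => Finsupp.single k (qBra q (k - 1) * a)

/-- The pairing `φ(v, w) = Σ_{n∈ℤ} v(n+1)·w(1−n)·γ_n` (a finite sum). -/
noncomputable def phi (q : ℝ) (v w : ℤ →₀ ℝ) : ℝ :=
  ∑ᶠ n : ℤ, v (n + 1) * w (1 - n) * qGamma q n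

/-! φ, B and Γ are (bi)linear, so the cyclic sum is trilinear and it suffices to evaluate it
on basis fields supported at `p`, `i`, `j`. These pair nontrivially only when `i + j + p = 3`.
Then, as `γ` is odd and `⟨m⟩γ_m = [m+1][m][m−1]/([2][3])`, the cyclic sum is a multiple of
`Σ_cyc [i−j][p][p−1][p−2]`, which vanishes: after clearing the denominators `q − q⁻¹` it is a
Laurent polynomial identity in `q`, `q^i`, `q^j`. -/

section

variable {q : ℝ}

lemma qInt_neg (m : ℤ) : qInt q (-m) = -qInt q m := by
  rw [qInt, qInt, neg_neg, ← neg_div, neg_sub]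

lemma qBra_neg (m : ℤ) : qBra q (-m) = qBra q m := by
  rw [qBra, qBra, neg_neg, add_comm]

lemma qGamma_neg (m : ℤ) : qGamma q (-m) = -qGamma q m := by
  rw [qGamma, qGamma, show -m + 1 = -(m - 1) by ring, show -m - 1 = -(m + 1) by ring,
    qInt_neg, qInt_neg, qInt_neg, qBra_neg]
  ring

lemma qBra_pos (hq : 0 < q) (m : ℤ) : 0 < qBra q m := by
  rw [qBra]; positivity

lemma qBra_mul_qGamma (hq : 0 < q) (m : ℤ) :
    qBra q m * qGamma q m
      = qInt q (m + 1) * qInt q m * qInt q (m - 1) / (qInt q 2 * qInt q 3) := by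
  rw [qGamma, mul_div_assoc', mul_comm (qInt q 2 * qInt q 3),
    mul_div_mul_left _ _ (qBra_pos hq m).ne']

lemma qInt_cyclic_sum_eq_zero (hq : q ≠ 0) {i j p : ℤ} (h : i + j + p = 3) :
    qInt q (i - j) * (qInt q p * qInt q (p - 1) * qInt q (p - 2))
      + qInt q (j - p) * (qInt q i * qInt q (i - 1) * qInt q (i - 2))
      + qInt q (p - i) * (qInt q j * qInt q (j - 1) * qInt q (j - 2)) = 0 := by
  obtain rfl : p = 3 - i - j := by omega
  simp only [qInt, div_eq_mul_inv, show (3 : ℤ) = 1 + 1 + 1 by norm_num, zpow_neg,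
    zpow_sub₀ hq, zpow_add₀ hq, zpow_one, show (2 : ℤ) = 1 + 1 by norm_num]
  generalize (q - q⁻¹)⁻¹ = e
  have hi : q ^ i ≠ 0 := zpow_ne_zero _ hq
  have hj : q ^ j ≠ 0 := zpow_ne_zero _ hq
  field_simp
  ring

lemma phi_eq_sum (v w : ℤ →₀ ℝ) :
    phi q v w = v.sum fun s a => a * w (2 - s) * qGamma q (s - 1) := by
  rw [phi, Finsupp.sum, ← finsum_eq_finsetSum_of_support_subset (s := v.support)]
  · refine finsum_eq_of_bijective (· + 1) (AddGroup.addRight_bijective 1) fun n => ?_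
    rw [show 2 - (n + 1) = 1 - n by ring, add_sub_cancel_right]
  · intro s hs
    simpa using left_ne_zero_of_mul (left_ne_zero_of_mul hs)

lemma phi_add_left (v v' w : ℤ →₀ ℝ) : phi q (v + v') w = phi q v w + phi q v' w := by
  simp only [phi_eq_sum]
  exact Finsupp.sum_add_index' (fun _ => by ring) (fun _ _ _ => by ring)

lemma phi_add_right (v w w' : ℤ →₀ ℝ) : phi q v (w + w') = phi q v w + phi q v w' := by
  simp only [phi_eq_sum, Finsupp.add_apply, mul_add, add_mul, Finsupp.sum_add]

lemma Gam_add (u u' : ℤ →₀ ℝ) : Gam q (u + u') = Gam q u + Gam q u' :=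
  Finsupp.sum_add_index' (by simp) (fun _ _ _ => by rw [mul_add, Finsupp.single_add])

lemma B_add_left (v v' w : ℤ →₀ ℝ) : B q (v + v') w = B q v w + B q v' w := by
  refine Finsupp.sum_add_index' (by simp) fun i a a' => ?_
  simp only [mul_add, add_mul, Finsupp.single_add, Finsupp.sum_add]

lemma B_add_right (v w w' : ℤ →₀ ℝ) : B q v (w + w') = B q v w + B q v w' := by
  simp only [B, ← Finsupp.sum_add]
  refine Finsupp.sum_congr fun i _ => Finsupp.sum_add_index' (by simp) fun j b b' => ?_
  rw [mul_add, Finsupp.single_add]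

lemma B_single_single (i j : ℤ) (b c : ℝ) :
    B q (Finsupp.single i b) (Finsupp.single j c)
      = Finsupp.single (i + j - 1) (qInt q (i - j) * b * c) := by
  rw [B, Finsupp.sum_single_index (by simp), Finsupp.sum_single_index (by simp)]

lemma Gam_single (p : ℤ) (a : ℝ) :
    Gam q (Finsupp.single p a) = Finsupp.single p (qBra q (p - 1) * a) :=
  Finsupp.sum_single_index (by simp)

lemma phi_B_Gam_single (i j p : ℤ) (a b c : ℝ) :
    phi q (B q (Finsupp.single i b) (Finsupp.single j c)) (Gam q (Finsupp.single p a))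
      = if i + j + p = 3 then
          a * b * c * (qInt q (i - j) * (qBra q (p - 1) * qGamma q (i + j - 2)))
        else 0 := by
  rw [B_single_single, Gam_single, phi_eq_sum, Finsupp.sum_single_index (by simp),
    Finsupp.single_apply, show i + j - 1 - 1 = i + j - 2 by ring]
  simp only [show p = 2 - (i + j - 1) ↔ i + j + p = 3 by omega]
  split_ifs <;> ring

lemma qBra_mul_qGamma_of_add_eq_three (hq : 0 < q) {i j p : ℤ} (h : i + j + p = 3) :
    qBra q (p - 1) * qGamma q (i + j - 2)
      = -(qInt q p * qInt q (p - 1) * qInt q (p - 2)) / (qInt q 2 * qInt q 3) := by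
  rw [show i + j - 2 = -(p - 1) by omega, qGamma_neg, mul_neg, qBra_mul_qGamma hq,
    sub_add_cancel, sub_sub, one_add_one_eq_two, neg_div]

end

noncomputable def cocycleSum (q : ℝ) (u v w : ℤ →₀ ℝ) : ℝ :=
  phi q (B q v w) (Gam q u) + phi q (B q w u) (Gam q v) + phi q (B q u v) (Gam q w)

namespace cocycleSum

variable {q : ℝ}

lemma rotate (u v w : ℤ →₀ ℝ) : cocycleSum q u v w = cocycleSum q v w u := by
  rw [cocycleSum, cocycleSum]
  ring

lemma add_left (u u' v w : ℤ →₀ ℝ) :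
    cocycleSum q (u + u') v w = cocycleSum q u v w + cocycleSum q u' v w := by
  simp only [cocycleSum, Gam_add, B_add_left, B_add_right, phi_add_left, phi_add_right]
  ring

lemma zero_left (v w : ℤ →₀ ℝ) : cocycleSum q 0 v w = 0 := by
  simpa using add_left (q := q) 0 0 v w

lemma eq_zero_of_forall_single_left {v w : ℤ →₀ ℝ}
    (h : ∀ p a, cocycleSum q (Finsupp.single p a) v w = 0) (u : ℤ →₀ ℝ) :
    cocycleSum q u v w = 0 := by
  induction u using Finsupp.induction_linear with
  | zero => exact zero_left v w
  | add u u' hu hu' => rw [add_left, hu, hu', add_zero]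
  | single p a => exact h p a

lemma eq_zero_of_forall_single
    (h : ∀ p i j a b c, cocycleSum q (Finsupp.single p a) (Finsupp.single i b)
      (Finsupp.single j c) = 0) (u v w : ℤ →₀ ℝ) :
    cocycleSum q u v w = 0 := by
  refine eq_zero_of_forall_single_left (fun p a => ?_) u
  rw [rotate]
  refine eq_zero_of_forall_single_left (fun i b => ?_) v
  rw [rotate]
  exact eq_zero_of_forall_single_left (fun j c => (rotate _ _ _).trans (h p i j a b c)) w

lemma single_eq_zero (hq : 0 < q) (p i j : ℤ) (a b c : ℝ) :
    cocycleSum q (Finsupp.single p a) (Finsupp.single i b) (Finsupp.single j c) = 0 := by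
  rw [cocycleSum, phi_B_Gam_single, phi_B_Gam_single, phi_B_Gam_single]
  by_cases h : i + j + p = 3
  · rw [if_pos h, if_pos (by omega), if_pos (by omega), qBra_mul_qGamma_of_add_eq_three hq h,
      qBra_mul_qGamma_of_add_eq_three hq (by omega : j + p + i = 3),
      qBra_mul_qGamma_of_add_eq_three hq (by omega : p + i + j = 3)]
    linear_combination (-(a * b * c) / (qInt q 2 * qInt q 3)) * qInt_cyclic_sum_eq_zero hq.ne' h
  · rw [if_neg h, if_neg (by omega), if_neg (by omega), add_zero, add_zero]

end cocycleSum

theorem phi_cocycle_general (q : ℝ) (hq : 0 < q) (u v w : ℤ →₀ ℝ) :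
    phi q (B q v w) (Gam q u) + phi q (B q w u) (Gam q v)
      + phi q (B q u v) (Gam q w) = 0 :=
  cocycleSum.eq_zero_of_forall_single (cocycleSum.single_eq_zero hq) u v w

/-- The twisted 2-cocycle condition:
`φ(B(v,w), Γu) + φ(B(w,u), Γv) + φ(B(u,v), Γw) = 0`. -/
theorem phi_cocycle (q : ℝ) (hq : 0 < q) (hq1 : q ≠ 1) (u v w : ℤ →₀ ℝ) :
    phi q (B q v w) (Gam q u) + phi q (B q w u) (Gam q v)
      + phi q (B q u v) (Gam q w) = 0 :=
  phi_cocycle_general q hq u v w
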